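/- Let η = x₀dx₁ − x₁dx₀ + x₂dx₃ − x₃dx₂ on ℂ⁴ and let S = {f = 0} ⊂ ℂ⁴ be given by a homogeneous polynomial f. If the restriction of η to the tangent spaces of the smooth locus of {f = 0} vanishes identically (i.e. {f=0} is invariant and η|_S = 0 as a form), and f is irreducible of degree ≥ 2, then a contradiction follows; concretely: there is no irreducible homogeneous polynomial f of degree ≥ 2 such that η ∧ df is divisible by f. -/

import Mathlib

/-!
Write `P i j = η i ∂ⱼf − η j ∂ᵢf` for the coefficients of `η ∧ df`. If `f` has degree `k ≥ 1`,
each `P i j` is homogeneous of degree `k` too, so `f ∣ P i j` forces `P i j = c i j • f` with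
constants `c i j`. Since `η ∧ η ∧ df = 0`, the 3-form `η ∧ ∑ c i j dxᵢ ∧ dxⱼ` vanishes; its
coefficients are linear forms in distinct variables, and this kills `c 1 0`. On the other hand,
contracting `η ∧ df` with the Euler field (on which `η` vanishes) gives `−k f η`, and reading
off the coefficient of `x₁` yields `c 1 0 = k`, so `k = 0`.
-/

open MvPolynomial

abbrev PolyC (m : ℕ) := MvPolynomial (Fin m) ℂ

/-- The contact form η = x₀dx₁ − x₁dx₀ + x₂dx₃ − x₃dx₂ on ℂ⁴. -/
noncomputable def ηc : Fin 4 → PolyC 4 := ![-X 1, X 0, -X 3, X 2]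

namespace MvPolynomial

variable {σ R : Type*} [CommRing R]

/-- The `dxᵢ ∧ dxⱼ`-coefficient of `α ∧ df`, for the 1-form `α = ∑ i, α i dxᵢ`. -/
noncomputable def wedgeDCoeff (α : σ → MvPolynomial σ R) (f : MvPolynomial σ R) (i j : σ) :
    MvPolynomial σ R :=
  α i * pderiv j f - α j * pderiv i f

theorem wedgeDCoeff_cyclic (α : σ → MvPolynomial σ R) (f : MvPolynomial σ R) (a b c : σ) :
    α a * wedgeDCoeff α f b c - α b * wedgeDCoeff α f a c + α c * wedgeDCoeff α f a b = 0 := by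
  unfold wedgeDCoeff
  ring

theorem sum_X_mul_wedgeDCoeff [Fintype σ] {α : σ → MvPolynomial σ R} {f : MvPolynomial σ R}
    {n : ℕ} (hα : ∑ i, X i * α i = 0) (hf : f.IsHomogeneous n) (j : σ) :
    ∑ i, X i * wedgeDCoeff α f i j = -(n * f * α j) := by
  simp only [wedgeDCoeff, mul_sub, Finset.sum_sub_distrib, ← mul_assoc, ← Finset.sum_mul, hα]
  simp only [mul_comm _ (α j), mul_assoc, ← Finset.mul_sum, hf.sum_X_mul_pderiv, nsmul_eq_mul]
  ring

theorem IsHomogeneous.wedgeDCoeff {α : σ → MvPolynomial σ R} {f : MvPolynomial σ R} {n : ℕ}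
    (hα : ∀ i, (α i).IsHomogeneous 1) (hf : f.IsHomogeneous (n + 1)) (i j : σ) :
    (wedgeDCoeff α f i j).IsHomogeneous (n + 1) := by
  have h : ∀ i j, (α i * pderiv j f).IsHomogeneous (n + 1) := fun i j => by
    simpa [add_comm] using (hα i).mul hf.pderiv
  exact (h i j).sub (h j i)

theorem IsHomogeneous.exists_eq_C_mul_of_dvd [IsDomain R] {f p : MvPolynomial σ R} {n : ℕ}
    (hf : f.IsHomogeneous n) (hf0 : f ≠ 0) (hp : p.IsHomogeneous n) (h : f ∣ p) :
    ∃ c, p = C c * f := by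
  obtain ⟨q, rfl⟩ := h
  rcases eq_or_ne q 0 with rfl | hq0
  · exact ⟨0, by simp⟩
  have hdeg := hp.totalDegree (mul_ne_zero hf0 hq0)
  rw [totalDegree_mul_of_isDomain hf0 hq0, hf.totalDegree hf0, add_eq_left] at hdeg
  exact ⟨coeff 0 q, by rw [mul_comm, ← totalDegree_eq_zero_iff_eq_C.mp hdeg]⟩

end MvPolynomial

theorem isHomogeneous_ηc (i : Fin 4) : (ηc i).IsHomogeneous 1 := by
  fin_cases i <;> simp [ηc, isHomogeneous_X, (isHomogeneous_X ℂ _).neg]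

theorem sum_X_mul_ηc : ∑ i, X i * ηc i = 0 := by
  simp only [Fin.sum_univ_four, ηc, Matrix.cons_val_zero, Matrix.cons_val_one, Matrix.cons_val]
  ring

/-- There is no irreducible homogeneous polynomial f of degree ≥ 2 on ℂ⁴ such that f
divides all the coefficients of the 2-form η ∧ df (i.e. no smooth hypersurface of
degree ≥ 2 is invariant by the contact form η). -/
theorem no_invariant_hypersurface_of_contact_form
    (f : PolyC 4) (k : ℕ) (hirr : Irreducible f) (hhom : f.IsHomogeneous k)
    (hk : 2 ≤ k) :
    ¬ (∀ i j, f ∣ (ηc i * pderiv j f - ηc j * pderiv i f)) := by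
  intro h
  obtain ⟨n, rfl⟩ : ∃ n, k = n + 1 := ⟨k - 1, by omega⟩
  have hf0 := hirr.ne_zero
  choose c hc using fun i j =>
    hhom.exists_eq_C_mul_of_dvd hf0 (hhom.wedgeDCoeff isHomogeneous_ηc i j) (h i j)
  have hc10_zero : c 1 0 = 0 := by
    have cyclic := wedgeDCoeff_cyclic ηc f 2 1 0
    rw [hc, hc, hc] at cyclic
    have lin : ηc 2 * C (c 1 0) - ηc 1 * C (c 2 0) + ηc 0 * C (c 2 1) = 0 :=
      mul_right_cancel₀ hf0 (by linear_combination cyclic)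
    simpa [ηc] using congrArg (pderiv 3) lin
  have hc10_eq : c 1 0 = n + 1 := by
    have euler := sum_X_mul_wedgeDCoeff sum_X_mul_ηc hhom 0
    simp only [hc, ← mul_assoc, ← Finset.sum_mul] at euler
    have lin : ∑ i, X i * C (c i 0) = C ((n + 1 : ℂ)) * X 1 :=
      mul_right_cancel₀ hf0 (by
        rw [euler, ηc, Matrix.cons_val_zero, C_add, C_1, map_natCast]
        push_cast
        ring)
    rw [← C_inj]
    simpa [Fin.sum_univ_four] using congrArg (pderiv 1) lin
  exact Nat.cast_add_one_ne_zero n (hc10_eq ▸ hc10_zero)
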